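/- arXiv:1911.02865 — 2 statements merged into one kernel-verified Lean document; each statement's English description precedes it below -/
import Mathlib

section
/- Let p ≥ 2, A = {1,…,p}, let 𝒱 be a binary coalescence tree over A, let 𝐧 : 𝒱̊ → ℤ be a monotone labelling, and let ρ̄ : (0,∞) → [0,∞) be nonincreasing. Let ū ∈ 𝒱 and let n ∈ ℤ be such that n < 𝐧(ū) if ū ∈ 𝒱̊, and 𝐧(u̲) < n where u̲ is the parent of ū if ū ≠ A. Define n_i = n for i ∈ ū and n_i = 𝐧({i} ∧ ū) for i ∉ ū. Then ∏_{i=1}^{p} ρ̄(2^{−n_i}) ≤ ρ̄(2^{−n}) · ∏_{v ∈ 𝒱̊} ρ̄(2^{−𝐧(v)}). -/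
/-!
Write `g m = ρ̄(2^{-m})`, a nonnegative nondecreasing function of `m`. Walking down from the root
to `ū`, each node `u ⊋ ū` has a child `c` disjoint from `ū`, and every `i ∈ c` has
`{i} ∧ ū = u`, so `n_i = 𝐧(u)`. A subtree `c` with `|c|` leaves has `|c| - 1` interior nodes,
all labelled at least `𝐧(u)` by monotonicity, so the `|c|` factors `g(𝐧(u))` are dominated by
`g(𝐧(u))` times the factors of the interior nodes of `c`; the leftover `g(𝐧(u))` is the factor
of `u` itself. At the bottom, the `|ū|` factors `g(n)` are dominated in the same way by `g(n)`
times the factors of the interior nodes of `ū`, since `n ≤ 𝐧(ū)`.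
-/

open Finset

variable {α : Type*}

def IsLaminar (𝒱 : Finset (Finset α)) : Prop :=
  ∀ u ∈ 𝒱, ∀ v ∈ 𝒱, Disjoint u v ∨ u ⊆ v ∨ v ⊆ u

theorem IsLaminar.subset_of_mem_of_mem_sdiff {𝒱 : Finset (Finset α)} (h : IsLaminar 𝒱)
    {u v : Finset α} (hu : u ∈ 𝒱) (hv : v ∈ 𝒱) {x y : α}
    (hxu : x ∈ u) (hxv : x ∈ v) (hyv : y ∈ v) (hyu : y ∉ u) : u ⊆ v := by
  rcases h u hu v hv with huv | huv | hvu
  · exact absurd hxv (disjoint_left.1 huv hxu)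
  · exact huv
  · exact absurd (hvu hyv) hyu

section

variable [DecidableEq α] {𝒱 : Finset (Finset α)}

theorem IsLaminar.subset_or_subset_of_subset_union (h : IsLaminar 𝒱) {a b v : Finset α}
    (ha : a ∈ 𝒱) (hb : b ∈ 𝒱) (hv : v ∈ 𝒱) (hvab : v ⊆ a ∪ b) (habv : ¬a ∪ b ⊆ v) :
    v ⊆ a ∨ v ⊆ b := by
  by_contra hcon
  obtain ⟨y, hyv, hya⟩ := not_subset.1 (not_or.1 hcon).1
  obtain ⟨z, hzv, hzb⟩ := not_subset.1 (not_or.1 hcon).2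
  have hyb : y ∈ b := (mem_union.1 (hvab hyv)).resolve_left hya
  have hza : z ∈ a := (mem_union.1 (hvab hzv)).resolve_right hzb
  exact habv (union_subset (h.subset_of_mem_of_mem_sdiff ha hv hza hzv hyv hya)
    (h.subset_of_mem_of_mem_sdiff hb hv hyb hyv hzv hzb))

theorem IsLaminar.isLeast_union (h : IsLaminar 𝒱) {a b s : Finset α} {i : α}
    (ha : a ∈ 𝒱) (hb : b ∈ 𝒱) (hab : a ∪ b ∈ 𝒱) (hdisj : Disjoint a b)
    (hsa : s ⊆ a) (hs : s.Nonempty) (hi : i ∈ b) :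
    IsLeast {w | w ∈ 𝒱 ∧ i ∈ w ∧ s ⊆ w} (a ∪ b) := by
  obtain ⟨x, hx⟩ := hs
  refine ⟨⟨hab, mem_union_right _ hi, hsa.trans subset_union_left⟩, ?_⟩
  rintro w ⟨hw, hiw, hsw⟩
  exact union_subset
    (h.subset_of_mem_of_mem_sdiff ha hw (hsa hx) (hsw hx) hiw (disjoint_right.1 hdisj hi))
    (h.subset_of_mem_of_mem_sdiff hb hw hi hiw (hsw hx) (disjoint_left.1 hdisj (hsa hx)))

def HasBinarySplits (𝒱 : Finset (Finset α)) : Prop :=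
  ∀ u ∈ 𝒱, 2 ≤ u.card → ∃ v ∈ 𝒱, ∃ w ∈ 𝒱, Disjoint v w ∧ v ∪ w = u ∧ v ≠ u ∧ w ≠ u

theorem HasBinarySplits.induction (h : HasBinarySplits 𝒱) {P : Finset α → Prop}
    (leaf : ∀ u ∈ 𝒱, u.card < 2 → P u)
    (node : ∀ u ∈ 𝒱, ∀ a ∈ 𝒱, ∀ b ∈ 𝒱, Disjoint a b → a ∪ b = u → a ≠ u → b ≠ u →
      P a → P b → P u) :
    ∀ u ∈ 𝒱, P u := by
  intro u
  induction u using Finset.strongInduction with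
  | H u ih =>
    intro hu
    by_cases hu2 : 2 ≤ u.card
    · obtain ⟨a, ha, b, hb, hdisj, rfl, hau, hbu⟩ := h u hu hu2
      exact node _ hu a ha b hb hdisj rfl hau hbu
        (ih a (ssubset_of_subset_of_ne subset_union_left hau) ha)
        (ih b (ssubset_of_subset_of_ne subset_union_right hbu) hb)
    · exact leaf u hu (by omega)

structure IsBinaryLaminar (𝒱 : Finset (Finset α)) : Prop where
  nonempty : ∀ u ∈ 𝒱, u.Nonempty
  laminar : IsLaminar 𝒱
  splits : HasBinarySplits 𝒱

theorem IsBinaryLaminar.two_le_card_union (hT : IsBinaryLaminar 𝒱) {a b : Finset α}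
    (ha : a ∈ 𝒱) (hb : b ∈ 𝒱) (hdisj : Disjoint a b) : 2 ≤ (a ∪ b).card := by
  have := (hT.nonempty a ha).card_pos
  have := (hT.nonempty b hb).card_pos
  rw [card_union_of_disjoint hdisj]
  omega

def interiorBelow (𝒱 : Finset (Finset α)) (u : Finset α) : Finset (Finset α) :=
  𝒱.filter fun v => v ⊆ u ∧ 2 ≤ v.card

theorem disjoint_interiorBelow {a b : Finset α} (hdisj : Disjoint a b) :
    Disjoint (interiorBelow 𝒱 a) (interiorBelow 𝒱 b) := by
  refine disjoint_left.2 fun v hva hvb => ?_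
  obtain ⟨-, hva, hv2⟩ := mem_filter.1 hva
  obtain ⟨-, hvb, -⟩ := mem_filter.1 hvb
  have := card_le_card (subset_inter hva hvb)
  rw [disjoint_iff_inter_eq_empty.1 hdisj, card_empty] at this
  omega

theorem notMem_interiorBelow_union {a b u : Finset α} (hab : a ∪ b = u) (hau : a ≠ u)
    (hbu : b ≠ u) : u ∉ interiorBelow 𝒱 a ∪ interiorBelow 𝒱 b := by
  subst hab
  simp only [interiorBelow, mem_union, mem_filter, not_or]
  exact ⟨fun ⟨_, haba, _⟩ => hau (subset_antisymm subset_union_left haba),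
    fun ⟨_, habb, _⟩ => hbu (subset_antisymm subset_union_right habb)⟩

theorem interiorBelow_eq_insert (h : IsLaminar 𝒱) {a b u : Finset α} (hu : u ∈ 𝒱)
    (ha : a ∈ 𝒱) (hb : b ∈ 𝒱) (hab : a ∪ b = u) (hu2 : 2 ≤ u.card) :
    interiorBelow 𝒱 u = insert u (interiorBelow 𝒱 a ∪ interiorBelow 𝒱 b) := by
  subst hab
  ext v
  simp only [interiorBelow, mem_insert, mem_union, mem_filter]
  constructor
  · rintro ⟨hv, hvab, hv2⟩
    by_cases hveq : v = a ∪ b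
    · exact Or.inl hveq
    · rcases h.subset_or_subset_of_subset_union ha hb hv hvab
        (fun habv => hveq (subset_antisymm hvab habv)) with hva | hvb
      · exact Or.inr (Or.inl ⟨hv, hva, hv2⟩)
      · exact Or.inr (Or.inr ⟨hv, hvb, hv2⟩)
  · rintro (rfl | ⟨hv, hva, hv2⟩ | ⟨hv, hvb, hv2⟩)
    · exact ⟨hu, subset_rfl, hu2⟩
    · exact ⟨hv, hva.trans subset_union_left, hv2⟩
    · exact ⟨hv, hvb.trans subset_union_right, hv2⟩

theorem IsBinaryLaminar.card_interiorBelow_add_one (hT : IsBinaryLaminar 𝒱) :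
    ∀ u ∈ 𝒱, (interiorBelow 𝒱 u).card + 1 = u.card := by
  refine hT.splits.induction (fun u hu hu2 => ?_)
    fun u hu a ha b hb hdisj hab hau hbu iha ihb => ?_
  · have hempty : interiorBelow 𝒱 u = ∅ :=
      filter_eq_empty_iff.2 fun v _ ⟨hvu, hv2⟩ => by have := card_le_card hvu; omega
    have := (hT.nonempty u hu).card_pos
    rw [hempty, card_empty]
    omega
  · have hu2 : 2 ≤ u.card := hab ▸ hT.two_le_card_union ha hb hdisj
    rw [interiorBelow_eq_insert hT.laminar hu ha hb hab hu2,
      card_insert_of_notMem (notMem_interiorBelow_union hab hau hbu),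
      card_union_of_disjoint (disjoint_interiorBelow hdisj),
      ← hab, card_union_of_disjoint hdisj]
    omega

def IsMonotoneLabelling (𝒱 : Finset (Finset α)) (nn : Finset α → ℤ) : Prop :=
  ∀ u ∈ 𝒱, ∀ v ∈ 𝒱, 2 ≤ u.card → 2 ≤ v.card → v ⊆ u → nn u ≤ nn v

variable {nn : Finset α → ℤ} {g : ℤ → ℝ}

theorem prod_le_mul_prod_interiorBelow_of_le (hT : IsBinaryLaminar 𝒱)
    (hmono : IsMonotoneLabelling 𝒱 nn) (hg : Monotone g) (hg0 : ∀ m, 0 ≤ g m)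
    {u : Finset α} (hu : u ∈ 𝒱) {c : ℤ} (hc : 2 ≤ u.card → c ≤ nn u)
    {k : α → ℤ} (hk : ∀ i ∈ u, k i ≤ c) :
    ∏ i ∈ u, g (k i) ≤ g c * ∏ v ∈ interiorBelow 𝒱 u, g (nn v) := by
  have hcv : ∀ v ∈ interiorBelow 𝒱 u, g c ≤ g (nn v) := by
    intro v hv
    obtain ⟨hv, hvu, hv2⟩ := mem_filter.1 hv
    have hu2 : 2 ≤ u.card := hv2.trans (card_le_card hvu)
    exact hg ((hc hu2).trans (hmono u hu v hv hu2 hv2 hvu))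
  calc ∏ i ∈ u, g (k i) ≤ ∏ _i ∈ u, g c :=
        prod_le_prod (fun _ _ => hg0 _) fun i hi => hg (hk i hi)
    _ = g c * ∏ _v ∈ interiorBelow 𝒱 u, g c := by
        rw [prod_const, prod_const, ← hT.card_interiorBelow_add_one u hu, pow_succ']
    _ ≤ g c * ∏ v ∈ interiorBelow 𝒱 u, g (nn v) :=
        mul_le_mul_of_nonneg_left (prod_le_prod (fun _ _ => hg0 _) hcv) (hg0 _)

theorem prod_le_mul_prod_interiorBelow_of_split (hT : IsBinaryLaminar 𝒱)
    (hmono : IsMonotoneLabelling 𝒱 nn) (hg : Monotone g) (hg0 : ∀ m, 0 ≤ g m)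
    {ubar : Finset α} (hubar : ubar.Nonempty) {n : ℤ} {k : α → ℤ}
    (hk_out : ∀ i ∉ ubar, ∀ l, IsLeast {w | w ∈ 𝒱 ∧ i ∈ w ∧ ubar ⊆ w} l → k i ≤ nn l)
    {u a b : Finset α} (hu : u ∈ 𝒱) (ha : a ∈ 𝒱) (hb : b ∈ 𝒱) (hdisj : Disjoint a b)
    (hab : a ∪ b = u) (hau : a ≠ u) (hbu : b ≠ u) (hubar_a : ubar ⊆ a)
    (iha : ∏ i ∈ a, g (k i) ≤ g n * ∏ v ∈ interiorBelow 𝒱 a, g (nn v)) :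
    ∏ i ∈ u, g (k i) ≤ g n * ∏ v ∈ interiorBelow 𝒱 u, g (nn v) := by
  have hu2 : 2 ≤ u.card := hab ▸ hT.two_le_card_union ha hb hdisj
  have hk_b : ∀ i ∈ b, k i ≤ nn u := fun i hi =>
    hk_out i (fun hi' => disjoint_left.1 hdisj (hubar_a hi') hi) u
      (hab ▸ hT.laminar.isLeast_union ha hb (hab ▸ hu) hdisj hubar_a hubar hi)
  have hb_le : ∏ i ∈ b, g (k i) ≤ g (nn u) * ∏ v ∈ interiorBelow 𝒱 b, g (nn v) :=
    prod_le_mul_prod_interiorBelow_of_le hT hmono hg hg0 hb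
      (fun hb2 => hmono u hu b hb hu2 hb2 (hab ▸ subset_union_right)) hk_b
  rw [← hab, prod_union hdisj, hab, interiorBelow_eq_insert hT.laminar hu ha hb hab hu2,
    prod_insert (notMem_interiorBelow_union hab hau hbu),
    prod_union (disjoint_interiorBelow hdisj)]
  calc (∏ i ∈ a, g (k i)) * ∏ i ∈ b, g (k i)
      ≤ (g n * ∏ v ∈ interiorBelow 𝒱 a, g (nn v)) *
          (g (nn u) * ∏ v ∈ interiorBelow 𝒱 b, g (nn v)) :=
        mul_le_mul iha hb_le (prod_nonneg fun _ _ => hg0 _)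
          (mul_nonneg (hg0 _) (prod_nonneg fun _ _ => hg0 _))
    _ = _ := by ring

theorem prod_le_mul_prod_interiorBelow (hT : IsBinaryLaminar 𝒱)
    (hmono : IsMonotoneLabelling 𝒱 nn) (hg : Monotone g) (hg0 : ∀ m, 0 ≤ g m)
    {ubar : Finset α} (hubar : ubar ∈ 𝒱) {n : ℤ} (hn : 2 ≤ ubar.card → n ≤ nn ubar)
    {k : α → ℤ} (hk_in : ∀ i ∈ ubar, k i ≤ n)
    (hk_out : ∀ i ∉ ubar, ∀ l, IsLeast {w | w ∈ 𝒱 ∧ i ∈ w ∧ ubar ⊆ w} l → k i ≤ nn l) :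
    ∀ u ∈ 𝒱, ubar ⊆ u → ∏ i ∈ u, g (k i) ≤ g n * ∏ v ∈ interiorBelow 𝒱 u, g (nn v) := by
  have hne := hT.nonempty ubar hubar
  have base := prod_le_mul_prod_interiorBelow_of_le hT hmono hg hg0 hubar hn hk_in
  refine hT.splits.induction (fun u hu hu2 hsub => ?_)
    fun u hu a ha b hb hdisj hab hau hbu iha ihb hsub => ?_
  · obtain rfl : ubar = u := eq_of_subset_of_card_le hsub (by have := hne.card_pos; omega)
    exact base
  · by_cases heq : ubar = u
    · exact heq ▸ base
    rcases hT.laminar.subset_or_subset_of_subset_union ha hb hubar (hab ▸ hsub)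
      (fun h => heq (subset_antisymm hsub (hab ▸ h))) with hsa | hsb
    · exact prod_le_mul_prod_interiorBelow_of_split hT hmono hg hg0 hne hk_out hu ha hb hdisj
        hab hau hbu hsa (iha hsa)
    · exact prod_le_mul_prod_interiorBelow_of_split hT hmono hg hg0 hne hk_out hu hb ha
        hdisj.symm ((union_comm b a).trans hab) hbu hau hsb (ihb hsb)

end

theorem stmt3_general (p : ℕ)
    (𝒱 : Finset (Finset ℕ))
    (hmem : ∀ u ∈ 𝒱, u.Nonempty ∧ u ⊆ Finset.Icc 1 p)
    (hlam : ∀ u ∈ 𝒱, ∀ v ∈ 𝒱, Disjoint u v ∨ u ⊆ v ∨ v ⊆ u)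
    (hroot : Finset.Icc 1 p ∈ 𝒱)
    (hbin : ∀ u ∈ 𝒱, 2 ≤ u.card →
      ∃ v ∈ 𝒱, ∃ w ∈ 𝒱, Disjoint v w ∧ v ∪ w = u ∧ v ≠ u ∧ w ≠ u)
    -- the monotone labelling `𝐧` on interior nodes
    (nn : Finset ℕ → ℤ)
    (hmono : ∀ u ∈ 𝒱, ∀ v ∈ 𝒱, 2 ≤ u.card → 2 ≤ v.card → v ⊆ u → nn u ≤ nn v)
    -- `ρ̄ : (0,∞) → [0,∞)` nonincreasing
    (ρ : ℝ → ℝ) (hρ0 : ∀ r : ℝ, 0 < r → 0 ≤ ρ r)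
    (hρmono : ∀ r s : ℝ, 0 < r → r ≤ s → ρ s ≤ ρ r)
    -- the distinguished node `ū` and the scale `n`
    (ubar : Finset ℕ) (hubar : ubar ∈ 𝒱) (n : ℤ)
    (hn₁ : 2 ≤ ubar.card → n < nn ubar)
    -- `lca i` is the least common ancestor `{i} ∧ ū` for `i ∉ ū`
    (lca : ℕ → Finset ℕ)
    (hlca : ∀ i ∈ Finset.Icc 1 p, i ∉ ubar →
      lca i ∈ 𝒱 ∧ 2 ≤ (lca i).card ∧ i ∈ lca i ∧ ubar ⊆ lca i ∧
        ∀ w ∈ 𝒱, i ∈ w → ubar ⊆ w → lca i ⊆ w) :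
    ∏ i ∈ Finset.Icc 1 p, ρ ((2 : ℝ) ^ (-(if i ∈ ubar then n else nn (lca i))))
      ≤ ρ ((2 : ℝ) ^ (-n)) *
        ∏ v ∈ 𝒱.filter (fun v => 2 ≤ v.card), ρ ((2 : ℝ) ^ (-(nn v))) := by
  have hT : IsBinaryLaminar 𝒱 := ⟨fun u hu => (hmem u hu).1, hlam, hbin⟩
  have hg : Monotone fun m : ℤ => ρ ((2 : ℝ) ^ (-m)) := fun m m' hmm' =>
    hρmono _ _ (zpow_pos two_pos _) (zpow_le_zpow_right₀ one_le_two (neg_le_neg hmm'))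
  have hk_out : ∀ i ∉ ubar, ∀ l, IsLeast {w | w ∈ 𝒱 ∧ i ∈ w ∧ ubar ⊆ w} l →
      (if i ∈ ubar then n else nn (lca i)) ≤ nn l := by
    intro i hi l hl
    obtain ⟨hlV, -, hil, hubl, hmin⟩ := hlca i ((hmem l hl.1.1).2 hl.1.2.1) hi
    have hlca_least : IsLeast {w | w ∈ 𝒱 ∧ i ∈ w ∧ ubar ⊆ w} (lca i) :=
      ⟨⟨hlV, hil, hubl⟩, fun w hw => hmin w hw.1 hw.2.1 hw.2.2⟩
    have hlca_eq : lca i = l := hlca_least.unique hl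
    rw [if_neg hi, hlca_eq]
  have hinterior : interiorBelow 𝒱 (Icc 1 p) = 𝒱.filter (fun v => 2 ≤ v.card) :=
    filter_congr fun v hv => by simp [(hmem v hv).2]
  rw [← hinterior]
  exact prod_le_mul_prod_interiorBelow hT hmono hg (fun m => hρ0 _ (zpow_pos two_pos _)) hubar
    (fun h => (hn₁ h).le) (fun i hi => by rw [if_pos hi]) hk_out _ hroot (hmem ubar hubar).2

theorem stmt3 (p : ℕ) (hp : 2 ≤ p)
    (𝒱 : Finset (Finset ℕ))
    (hmem : ∀ u ∈ 𝒱, u.Nonempty ∧ u ⊆ Finset.Icc 1 p)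
    (hlam : ∀ u ∈ 𝒱, ∀ v ∈ 𝒱, Disjoint u v ∨ u ⊆ v ∨ v ⊆ u)
    (hroot : Finset.Icc 1 p ∈ 𝒱) (hsing : ∀ a ∈ Finset.Icc 1 p, {a} ∈ 𝒱)
    (hbin : ∀ u ∈ 𝒱, 2 ≤ u.card →
      ∃ v ∈ 𝒱, ∃ w ∈ 𝒱, Disjoint v w ∧ v ∪ w = u ∧ v ≠ u ∧ w ≠ u)
    -- the monotone labelling `𝐧` on interior nodes
    (nn : Finset ℕ → ℤ)
    (hmono : ∀ u ∈ 𝒱, ∀ v ∈ 𝒱, 2 ≤ u.card → 2 ≤ v.card → v ⊆ u → nn u ≤ nn v)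
    -- `ρ̄ : (0,∞) → [0,∞)` nonincreasing
    (ρ : ℝ → ℝ) (hρ0 : ∀ r : ℝ, 0 < r → 0 ≤ ρ r)
    (hρmono : ∀ r s : ℝ, 0 < r → r ≤ s → ρ s ≤ ρ r)
    -- the distinguished node `ū` and the scale `n`
    (ubar : Finset ℕ) (hubar : ubar ∈ 𝒱) (n : ℤ)
    (hn₁ : 2 ≤ ubar.card → n < nn ubar)
    -- `𝐧(u̲) < n` for the parent `u̲` of `ū`, i.e. the minimal member of `𝒱`
    -- strictly containing `ū` (this exists whenever `ū ≠ A`)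
    (hn₂ : ∀ v ∈ 𝒱, ubar ⊂ v → (∀ w ∈ 𝒱, ubar ⊂ w → v ⊆ w) → nn v < n)
    -- `lca i` is the least common ancestor `{i} ∧ ū` for `i ∉ ū`
    (lca : ℕ → Finset ℕ)
    (hlca : ∀ i ∈ Finset.Icc 1 p, i ∉ ubar →
      lca i ∈ 𝒱 ∧ 2 ≤ (lca i).card ∧ i ∈ lca i ∧ ubar ⊆ lca i ∧
        ∀ w ∈ 𝒱, i ∈ w → ubar ⊆ w → lca i ⊆ w) :
    ∏ i ∈ Finset.Icc 1 p, ρ ((2 : ℝ) ^ (-(if i ∈ ubar then n else nn (lca i))))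
      ≤ ρ ((2 : ℝ) ^ (-n)) *
        ∏ v ∈ 𝒱.filter (fun v => 2 ≤ v.card), ρ ((2 : ℝ) ^ (-(nn v))) :=
  stmt3_general p 𝒱 hmem hlam hroot hbin nn hmono ρ hρ0 hρmono ubar hubar n hn₁ lca hlca
end

section
/- For d ∈ {2,3} and every δ ∈ (0,1/2), the integral ∫_{ℝ×ℝ^d} P(t,x) · |x| · ρ(‖(t,x)‖)² dt dx is finite. In particular, whenever |κ(z)| ≤ ρ(‖z‖)², the ℝ^d-valued constant ∫_{ℝ×ℝ^d} P(z) · x · κ(z) dz converges absolutely. -/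
open Real MeasureTheory

/-- Space-time `ℝ × ℝ^d`. -/
abbrev SpaceTime (d : ℕ) := ℝ × EuclideanSpace ℝ (Fin d)

/-- The parabolic norm `‖(t,x)‖ = (|x|⁴ + t²)^{1/4}`. -/
noncomputable def pnorm {d : ℕ} (z : SpaceTime d) : ℝ :=
  (‖z.2‖ ^ 4 + z.1 ^ 2) ^ ((1 : ℝ) / 4)

/-- The heat kernel on `ℝ × ℝ^d`. -/
noncomputable def heatP (d : ℕ) (z : SpaceTime d) : ℝ :=
  if 0 < z.1 then (4 * π * z.1) ^ (-(d : ℝ) / 2) * Real.exp (-‖z.2‖ ^ 2 / (4 * z.1))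
  else 0

/-- `ρ(r)² = min (r^{-(1-2δ)}) (r^{-(d+2)-2δ})`. -/
noncomputable def rhoSq (d : ℕ) (δ r : ℝ) : ℝ :=
  min (r ^ (-(1 - 2 * δ))) (r ^ (-((d : ℝ) + 2) - 2 * δ))

/-! For `t > 0` the parabolic norm of `(t, x)` is at least `√t` and `ρ²` is decreasing, so the
weight is at most `ρ(√t)²`. The first spatial moment of the heat kernel is of order `√t`: the
inequality `u ≤ s · exp (u² / 4s²)` gives `P(t,x) |x| ≤ 2^{(d+1)/2} √t P(2t,x)`, and `P(2t, ·)` has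
mass one. What is left is `∫₀^∞ √t ρ(√t)² dt`, whose integrand is at most `t^δ` near `0` and
`t^{-(d+1)/2-δ}` at infinity. -/

lemma heatP_of_nonpos {d : ℕ} {z : SpaceTime d} (h : z.1 ≤ 0) : heatP d z = 0 :=
  if_neg h.not_gt

lemma heatP_nonneg (d : ℕ) (z : SpaceTime d) : 0 ≤ heatP d z := by
  unfold heatP; split_ifs <;> positivity

@[fun_prop]
lemma measurable_heatP (d : ℕ) : Measurable (heatP d) :=
  Measurable.ite (measurableSet_lt measurable_const measurable_fst) (by fun_prop) measurable_const

lemma integral_heatP_slice (d : ℕ) {t : ℝ} (ht : 0 < t) : ∫ x, heatP d (t, x) = 1 := by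
  have hgauss := GaussianFourier.integral_rexp_neg_mul_sq_norm
    (V := EuclideanSpace ℝ (Fin d)) (show 0 < 1 / (4 * t) by positivity)
  rw [finrank_euclideanSpace_fin, show π / (1 / (4 * t)) = 4 * π * t by field_simp] at hgauss
  have hexp : ∀ x : EuclideanSpace ℝ (Fin d),
      rexp (-‖x‖ ^ 2 / (4 * t)) = rexp (-(1 / (4 * t)) * ‖x‖ ^ 2) := fun x => by ring_nf
  simp only [heatP, if_pos ht, hexp, integral_const_mul, hgauss]
  rw [← rpow_add (by positivity), neg_div, neg_add_cancel, rpow_zero]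

lemma integrable_heatP_slice (d : ℕ) (t : ℝ) : Integrable fun x => heatP d (t, x) := by
  rcases le_or_gt t 0 with ht | ht
  · simp only [heatP_of_nonpos (z := (t, _)) ht]
    exact integrable_zero _ _ _
  · exact integrable_of_integral_eq_one (integral_heatP_slice d ht)

lemma le_mul_exp_sq_div {s : ℝ} (hs : 0 < s) (u : ℝ) : u ≤ s * rexp (u ^ 2 / (4 * s ^ 2)) := by
  have hpoly : u ≤ s * (u ^ 2 / (4 * s ^ 2) + 1) := by
    have : 0 ≤ (u - 2 * s) ^ 2 / (4 * s) := by positivity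
    have h : s * (u ^ 2 / (4 * s ^ 2) + 1) - u = (u - 2 * s) ^ 2 / (4 * s) := by
      field_simp; ring
    linarith
  exact hpoly.trans (mul_le_mul_of_nonneg_left (add_one_le_exp _) hs.le)

lemma heatP_mul_norm_le (d : ℕ) (t : ℝ) (x : EuclideanSpace ℝ (Fin d)) :
    heatP d (t, x) * ‖x‖ ≤ 2 ^ ((d : ℝ) / 2) * √2 * √t * heatP d (2 * t, x) := by
  rcases le_or_gt t 0 with ht | ht
  · rw [heatP_of_nonpos ht, zero_mul]
    exact mul_nonneg (by positivity) (heatP_nonneg d _)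
  have hs : 0 < √(2 * t) := sqrt_pos.2 (by positivity)
  have hgauss : rexp (-‖x‖ ^ 2 / (4 * t)) * ‖x‖ ≤ √(2 * t) * rexp (-‖x‖ ^ 2 / (8 * t)) := by
    calc rexp (-‖x‖ ^ 2 / (4 * t)) * ‖x‖
        ≤ rexp (-‖x‖ ^ 2 / (4 * t)) * (√(2 * t) * rexp (‖x‖ ^ 2 / (4 * √(2 * t) ^ 2))) :=
          mul_le_mul_of_nonneg_left (le_mul_exp_sq_div hs _) (exp_pos _).le
      _ = √(2 * t) * rexp (-‖x‖ ^ 2 / (8 * t)) := by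
          rw [sq_sqrt (by positivity), mul_left_comm, ← exp_add]
          congr 2
          field_simp
          ring
  have hconst : (4 * π * t) ^ (-(d : ℝ) / 2) =
      2 ^ ((d : ℝ) / 2) * (4 * π * (2 * t)) ^ (-(d : ℝ) / 2) := by
    rw [show 4 * π * (2 * t) = 2 * (4 * π * t) by ring, mul_rpow (x := 2) (by norm_num)
      (by positivity), ← mul_assoc, ← rpow_add two_pos, neg_div, add_neg_cancel, rpow_zero,
      one_mul]
  simp only [heatP, if_pos ht, if_pos (by positivity : 0 < 2 * t)]
  calc (4 * π * t) ^ (-(d : ℝ) / 2) * rexp (-‖x‖ ^ 2 / (4 * t)) * ‖x‖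
      ≤ (4 * π * t) ^ (-(d : ℝ) / 2) * (√(2 * t) * rexp (-‖x‖ ^ 2 / (8 * t))) := by
        rw [mul_assoc]; gcongr
    _ = _ := by rw [hconst, sqrt_mul zero_le_two]; ring_nf

lemma integrable_heatP_mul_norm_mul {d : ℕ} {g : ℝ → ℝ} (hg : Measurable g)
    (hint : IntegrableOn (fun t => √t * g t) (Set.Ioi 0)) :
    Integrable fun z : SpaceTime d => heatP d z * ‖z.2‖ * g z.1 := by
  set C : ℝ := 2 ^ ((d : ℝ) / 2) * √2
  set M : SpaceTime d → ℝ := fun z => C * (√z.1 * |g z.1|) * heatP d (2 * z.1, z.2)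
  have hM_meas : Measurable M := by simp only [M]; fun_prop
  have hM_slice : ∀ t, ∫ x, ‖M (t, x)‖ = (Set.Ioi 0).indicator (fun t => C * ‖√t * g t‖) t := by
    intro t
    have hM_nonneg : ∀ x, 0 ≤ M (t, x) := fun x => by have := heatP_nonneg d (2 * t, x); positivity
    simp only [Real.norm_of_nonneg (hM_nonneg _), M, integral_const_mul, Real.norm_eq_abs, abs_mul,
      abs_of_nonneg (sqrt_nonneg _)]
    rcases le_or_gt t 0 with ht | ht
    · simp [sqrt_eq_zero'.2 ht, Set.indicator_of_notMem (Set.notMem_Ioi.2 ht)]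
    · rw [integral_heatP_slice d (by positivity), mul_one, Set.indicator_of_mem (Set.mem_Ioi.2 ht)]
  have hM : Integrable M := by
    rw [Measure.volume_eq_prod, integrable_prod_iff hM_meas.aestronglyMeasurable]
    refine ⟨ae_of_all _ fun t =>
      (integrable_heatP_slice d (2 * t)).const_mul (C * (√t * |g t|)), ?_⟩
    simp only [hM_slice]
    exact (integrable_indicator_iff measurableSet_Ioi).2 (hint.norm.const_mul C)
  refine hM.mono' (by fun_prop) (ae_of_all _ fun z => ?_)
  calc ‖heatP d z * ‖z.2‖ * g z.1‖ = heatP d z * ‖z.2‖ * |g z.1| := by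
        rw [Real.norm_eq_abs, abs_mul, abs_of_nonneg (by have := heatP_nonneg d z; positivity)]
    _ ≤ C * √z.1 * heatP d (2 * z.1, z.2) * |g z.1| :=
        mul_le_mul_of_nonneg_right (heatP_mul_norm_le d z.1 z.2) (abs_nonneg _)
    _ = M z := by ring

lemma rhoSq_nonneg (d : ℕ) (δ : ℝ) {r : ℝ} (hr : 0 ≤ r) : 0 ≤ rhoSq d δ r :=
  le_min (rpow_nonneg hr _) (rpow_nonneg hr _)

lemma rhoSq_antitoneOn {d : ℕ} {δ : ℝ} (hδ : δ ∈ Set.Icc (0 : ℝ) (1 / 2)) :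
    AntitoneOn (rhoSq d δ) (Set.Ioi 0) := fun r hr R _ hrR =>
  min_le_min (rpow_le_rpow_of_nonpos hr hrR (by linarith [hδ.2]))
    (rpow_le_rpow_of_nonpos hr hrR (by linarith [hδ.1, (d.cast_nonneg : (0 : ℝ) ≤ d)]))

lemma pnorm_nonneg {d : ℕ} (z : SpaceTime d) : 0 ≤ pnorm z :=
  rpow_nonneg (by positivity) _

lemma sqrt_le_pnorm {d : ℕ} (t : ℝ) (x : EuclideanSpace ℝ (Fin d)) : √t ≤ pnorm (t, x) := by
  rcases le_or_gt t 0 with ht | ht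
  · rw [sqrt_eq_zero'.2 ht]; exact pnorm_nonneg _
  have hsqrt : √t = (t ^ 2) ^ ((1 : ℝ) / 4) := by
    rw [← rpow_natCast, ← rpow_mul ht.le, sqrt_eq_rpow]; norm_num
  rw [hsqrt]
  exact rpow_le_rpow (by positivity) (le_add_of_nonneg_left (by positivity)) (by norm_num)

lemma rhoSq_pnorm_le {d : ℕ} {δ : ℝ} (hδ : δ ∈ Set.Icc (0 : ℝ) (1 / 2)) {t : ℝ} (ht : 0 < t)
    (x : EuclideanSpace ℝ (Fin d)) : rhoSq d δ (pnorm (t, x)) ≤ rhoSq d δ √t :=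
  rhoSq_antitoneOn hδ (sqrt_pos.2 ht) ((sqrt_pos.2 ht).trans_le (sqrt_le_pnorm t x))
    (sqrt_le_pnorm t x)

lemma mul_rhoSq_le_rpow_left {d : ℕ} (δ : ℝ) {r : ℝ} (hr : 0 < r) :
    r * rhoSq d δ r ≤ r ^ (2 * δ) := by
  calc r * rhoSq d δ r ≤ r * r ^ (-(1 - 2 * δ)) := by gcongr; exact min_le_left _ _
    _ = r ^ (2 * δ) := by rw [mul_comm, ← rpow_add_one hr.ne']; ring_nf

lemma mul_rhoSq_le_rpow_right {d : ℕ} (δ : ℝ) {r : ℝ} (hr : 0 < r) :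
    r * rhoSq d δ r ≤ r ^ (-((d : ℝ) + 1) - 2 * δ) := by
  calc r * rhoSq d δ r ≤ r * r ^ (-((d : ℝ) + 2) - 2 * δ) := by gcongr; exact min_le_right _ _
    _ = r ^ (-((d : ℝ) + 1) - 2 * δ) := by rw [mul_comm, ← rpow_add_one hr.ne']; ring_nf

lemma integrableOn_sqrt_mul_rhoSq_sqrt {d : ℕ} {δ : ℝ} (hδ : 0 ≤ δ) (hdδ : 1 < (d : ℝ) + 2 * δ) :
    IntegrableOn (fun t => √t * rhoSq d δ √t) (Set.Ioi 0) := by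
  have hmeas : Measurable fun t => √t * rhoSq d δ √t := by unfold rhoSq; fun_prop
  rw [← Set.Ioc_union_Ioi_eq_Ioi zero_le_one]
  refine IntegrableOn.union ?_ ?_
  · refine Integrable.mono' (integrableOn_const (C := 1) measure_Ioc_lt_top.ne)
      hmeas.aestronglyMeasurable.restrict ((ae_restrict_iff' measurableSet_Ioc).2 ?_)
    refine ae_of_all _ fun t ⟨ht₀, ht₁⟩ => ?_
    have hr : 0 < √t := sqrt_pos.2 ht₀
    rw [Real.norm_of_nonneg (mul_nonneg hr.le (rhoSq_nonneg d δ hr.le))]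
    exact (mul_rhoSq_le_rpow_left δ hr).trans
      (rpow_le_one hr.le (sqrt_le_one.2 ht₁) (by linarith))
  · refine Integrable.mono' (integrableOn_Ioi_rpow_of_lt (a := (-((d : ℝ) + 1) - 2 * δ) / 2)
      (by linarith) one_pos) hmeas.aestronglyMeasurable.restrict
      ((ae_restrict_iff' measurableSet_Ioi).2 (ae_of_all _ fun t (ht : 1 < t) => ?_))
    have hr : 0 < √t := sqrt_pos.2 (one_pos.trans ht)
    rw [Real.norm_of_nonneg (mul_nonneg hr.le (rhoSq_nonneg d δ hr.le))]
    calc √t * rhoSq d δ √t ≤ √t ^ (-((d : ℝ) + 1) - 2 * δ) := mul_rhoSq_le_rpow_right δ hr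
      _ = t ^ ((-((d : ℝ) + 1) - 2 * δ) / 2) := by
        rw [sqrt_eq_rpow, ← rpow_mul (one_pos.trans ht).le]; ring_nf

lemma heatP_mul_rhoSq_pnorm_le {d : ℕ} {δ : ℝ} (hδ : δ ∈ Set.Icc (0 : ℝ) (1 / 2))
    (z : SpaceTime d) : heatP d z * rhoSq d δ (pnorm z) ≤ heatP d z * rhoSq d δ √z.1 := by
  rcases le_or_gt z.1 0 with ht | ht
  · simp [heatP_of_nonpos ht]
  · exact mul_le_mul_of_nonneg_left (rhoSq_pnorm_le hδ ht z.2) (heatP_nonneg d z)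

lemma heatP_mul_abs_le_of_abs_le {d : ℕ} {κ ρ : SpaceTime d → ℝ}
    (hκ : ∀ z, z ≠ 0 → |κ z| ≤ ρ z) (z : SpaceTime d) : heatP d z * |κ z| ≤ heatP d z * ρ z := by
  rcases le_or_gt z.1 0 with ht | ht
  · simp [heatP_of_nonpos ht]
  · exact mul_le_mul_of_nonneg_left (hκ z fun h => ht.ne' (by simp [h])) (heatP_nonneg d z)

theorem stmt6 (d : ℕ) (hd : d = 2 ∨ d = 3) (δ : ℝ) (hδ : δ ∈ Set.Ioo (0 : ℝ) (1 / 2)) :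
    Integrable (fun z : SpaceTime d => heatP d z * ‖z.2‖ * rhoSq d δ (pnorm z)) ∧
    ∀ κ : SpaceTime d → ℝ, Measurable κ →
      (∀ z : SpaceTime d, z ≠ 0 → |κ z| ≤ rhoSq d δ (pnorm z)) →
      Integrable (fun z : SpaceTime d => (heatP d z * κ z) • z.2) := by
  have hd₁ : (1 : ℝ) ≤ d := by rcases hd with rfl | rfl <;> norm_num
  have hδ' : δ ∈ Set.Icc (0 : ℝ) (1 / 2) := Set.Ioo_subset_Icc_self hδ
  have hmajorant : Integrable fun z : SpaceTime d => heatP d z * ‖z.2‖ * rhoSq d δ √z.1 :=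
    integrable_heatP_mul_norm_mul (by unfold rhoSq; fun_prop)
      (integrableOn_sqrt_mul_rhoSq_sqrt hδ'.1 (by linarith [hδ.1]))
  have hF : Integrable fun z : SpaceTime d => heatP d z * ‖z.2‖ * rhoSq d δ (pnorm z) := by
    refine hmajorant.mono' (by unfold rhoSq pnorm; fun_prop) (ae_of_all _ fun z => ?_)
    have := rhoSq_nonneg d δ (pnorm_nonneg z)
    rw [Real.norm_of_nonneg (by have := heatP_nonneg d z; positivity)]
    linarith [mul_le_mul_of_nonneg_right (heatP_mul_rhoSq_pnorm_le hδ' z) (norm_nonneg z.2)]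
  refine ⟨hF, fun κ hκ hκ_le => hF.mono' (by fun_prop) (ae_of_all _ fun z => ?_)⟩
  rw [norm_smul, Real.norm_eq_abs, abs_mul, abs_of_nonneg (heatP_nonneg d z)]
  linarith [mul_le_mul_of_nonneg_right (heatP_mul_abs_le_of_abs_le hκ_le z) (norm_nonneg z.2)]
end
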